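/- Let N ≥ 1 and k_1, …, k_N be natural numbers each at least 3, with K_0 = 0, K_j = k_1 + ⋯ + k_j, M = K_N, and leaf set T ⊆ {0,1}^M. Let P be the tree consisting of all prefixes (of every length from 0 to M) of elements of T. Then the splitting vertices of P are exactly the prefixes of elements of T whose length equals K_j for some j with 0 ≤ j ≤ N − 1; in particular, every maximal ray of P contains exactly N splitting vertices, one of each length K_0, K_1, …, K_{N−1}. -/
import Mathlib


/-- Partial sums `K_j = k_1 + ⋯ + k_j` (so `K_0 = 0`). -/
def Kk (k : ℕ → ℕ) (j : ℕ) : ℕ := ∑ i ∈ Finset.range j, k i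

/-- The `i`-th block of a leaf: first bit `c`, followed by `m - 1` copies of `!c`.
With `c = false` this is `a_i = 0 1 1 ⋯ 1`, with `c = true` it is `b_i = 1 0 0 ⋯ 0`. -/
def block (c : Bool) (m : ℕ) : List Bool := c :: List.replicate (m - 1) (!c)

/-- The leaf set as lists: concatenations `s_1 s_2 ⋯ s_n` with `s_i ∈ {a_i, b_i}`. -/
def leavesList (k : ℕ → ℕ) : ℕ → Set (List Bool)
  | 0 => {[]}
  | n + 1 => {l | ∃ p ∈ leavesList k n, ∃ c : Bool, l = p ++ block c (k n)}

/-- The prefix closure of a set of binary strings. -/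
def prefixClosure (T : Set (List Bool)) : Set (List Bool) := {p | ∃ t ∈ T, p <+: t}

/-- A tree is a set of finite binary strings closed under taking prefixes. -/
def IsTree (S : Set (List Bool)) : Prop := ∀ l ∈ S, ∀ p : List Bool, p <+: l → p ∈ S

/-- `w` is a splitting vertex of `S` if both one-bit extensions of `w` lie in `S`. -/
def SplitVertex (S : Set (List Bool)) (w : List Bool) : Prop :=
  w ∈ S ∧ w ++ [false] ∈ S ∧ w ++ [true] ∈ S

/-- `LacunaryLE n S`: `S` is lacunary of order at most `n`. Order `≤ 0` means
totally ordered by the prefix relation (a single, possibly truncated, ray);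
order `≤ n + 1` means there is a tree, lacunary of order `≤ n`, containing all
splitting vertices of `S`. -/
def LacunaryLE : ℕ → Set (List Bool) → Prop
  | 0 => fun S => ∀ a ∈ S, ∀ b ∈ S, a <+: b ∨ b <+: a
  | n + 1 => fun S => ∃ L : Set (List Bool), IsTree L ∧ LacunaryLE n L ∧
      ∀ w : List Bool, SplitVertex S w → w ∈ L

lemma Kk_succ (k : ℕ → ℕ) (n : ℕ) : Kk k (n+1) = Kk k n + k n :=
  Finset.sum_range_succ _ _

lemma Kk_mono (k : ℕ → ℕ) {i j : ℕ} (h : i ≤ j) : Kk k i ≤ Kk k j :=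
  Finset.sum_le_sum_of_subset (Finset.range_subset_range.2 h)

lemma block_length {m : ℕ} (hm : 1 ≤ m) (c : Bool) : (block c m).length = m := by
  simp [block]; omega

lemma leaf_length {k : ℕ → ℕ} : ∀ {n : ℕ}, (∀ i < n, 1 ≤ k i) → ∀ {t : List Bool},
    t ∈ leavesList k n → t.length = Kk k n
  | 0, _, t, ht => by
      simp only [leavesList, Set.mem_singleton_iff] at ht
      simp [ht, Kk]
  | n+1, hk, t, ht => by
      obtain ⟨q, hq, c, rfl⟩ := ht
      have h1 := leaf_length (fun i hi => hk i (Nat.lt_succ_of_lt hi)) hq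
      simp [Kk_succ, h1, block_length (hk n (Nat.lt_succ_self n))]

lemma leaf_getElem {k : ℕ → ℕ} {n : ℕ} (hk : ∀ i < n, 1 ≤ k i) {t : List Bool}
    (ht : t ∈ leavesList k n) {j : ℕ} (hj : j < n) {p : ℕ} (h1 : Kk k j < p)
    (h2 : p < Kk k (j+1)) : t[p]? = t[Kk k j]?.map (fun b => !b) := by
  induction n generalizing t j p with
  | zero => omega
  | succ n IH =>
      obtain ⟨q, hq, c, rfl⟩ := ht
      have hk' : ∀ i < n, 1 ≤ k i := fun i hi => hk i (Nat.lt_succ_of_lt hi)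
      have hql : q.length = Kk k n := leaf_length hk' hq
      rcases Nat.lt_or_ge j n with hjn | hjn
      · have hlt : p < q.length := by
          rw [hql]; exact lt_of_lt_of_le h2 (Kk_mono k hjn)
        have hlt2 : Kk k j < q.length := lt_trans h1 hlt
        rw [List.getElem?_append_left hlt, List.getElem?_append_left hlt2]
        exact IH hk' hq hjn h1 h2
      · have hjn' : j = n := by omega
        subst hjn'
        have hge : q.length ≤ Kk k j := le_of_eq hql
        have hge2 : q.length ≤ p := le_of_lt (lt_of_le_of_lt hge h1)
        rw [List.getElem?_append_right hge, List.getElem?_append_right hge2, hql]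
        rw [Nat.sub_self]
        have hd1 : 1 ≤ p - Kk k j := by omega
        have hd2 : p - Kk k j < k j := by
          have := Kk_succ k j; omega
        obtain ⟨d, hd⟩ : ∃ d, p - Kk k j = d + 1 := ⟨p - Kk k j - 1, by omega⟩
        rw [hd]
        simp only [block, List.getElem?_cons_zero, List.getElem?_cons_succ, Option.map_some]
        rw [List.getElem?_replicate_of_lt (by omega)]

lemma take_leaf {k : ℕ → ℕ} : ∀ {n : ℕ}, (∀ i < n, 1 ≤ k i) → ∀ {t : List Bool},
    t ∈ leavesList k n → ∀ {j : ℕ}, j ≤ n → t.take (Kk k j) ∈ leavesList k j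
  | 0, _, t, ht, j, hj => by
      interval_cases j
      simp only [leavesList, Set.mem_singleton_iff] at ht ⊢
      simp [ht]
  | n+1, hk, t, ht, j, hj => by
      obtain ⟨q, hq, c, rfl⟩ := ht
      have hk' : ∀ i < n, 1 ≤ k i := fun i hi => hk i (Nat.lt_succ_of_lt hi)
      have hql : q.length = Kk k n := leaf_length hk' hq
      rcases Nat.lt_or_ge j (n+1) with hjn | hjn
      · have hle : Kk k j ≤ q.length := hql ▸ Kk_mono k (Nat.lt_succ_iff.mp hjn)
        rw [List.take_append_of_le_length hle]
        exact take_leaf hk' hq (Nat.lt_succ_iff.mp hjn)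
      · have hjn' : j = n + 1 := le_antisymm hj hjn
        subst hjn'
        have hlen : (q ++ block c (k n)).length = Kk k (n+1) :=
          leaf_length hk ⟨q, hq, c, rfl⟩
        rw [List.take_of_length_le (le_of_eq hlen)]
        exact ⟨q, hq, c, rfl⟩

lemma extend_leaf {k : ℕ → ℕ} {n j : ℕ} (hj : j < n) {p : List Bool}
    (hp : p ∈ leavesList k j) (b : Bool) : ∃ t ∈ leavesList k n, p ++ [b] <+: t := by
  induction n with
  | zero => omega
  | succ n IH =>
      rcases Nat.lt_or_ge j n with hjn | hjn
      · obtain ⟨t, ht, hpt⟩ := IH hjn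
        exact ⟨t ++ block false (k n), ⟨t, ht, false, rfl⟩,
          hpt.trans (List.prefix_append _ _)⟩
      · have hjn' : j = n := by omega
        subst hjn'
        refine ⟨p ++ block b (k j), ⟨p, hp, b, rfl⟩, ?_⟩
        rw [List.prefix_append_right_inj]
        exact ⟨List.replicate (k j - 1) (!b), rfl⟩

lemma Kk_between {k : ℕ → ℕ} : ∀ {n m : ℕ}, m < Kk k n →
    ∃ j < n, Kk k j ≤ m ∧ m < Kk k (j+1)
  | 0, m, hm => by simp [Kk] at hm
  | n+1, m, hm => by
      rcases Nat.lt_or_ge m (Kk k n) with h | h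
      · obtain ⟨j, hj, h1, h2⟩ := Kk_between h
        exact ⟨j, Nat.lt_succ_of_lt hj, h1, h2⟩
      · exact ⟨n, Nat.lt_succ_self n, h, hm⟩

/-- The splitting vertices of `P = prefixClosure T` are exactly the prefixes of
leaves whose length is `K_j` for some `0 ≤ j ≤ N - 1`; moreover every maximal ray
(the set of prefixes of a leaf `t`) contains exactly one splitting vertex of each
length `K_0, …, K_{N-1}` (hence exactly `N` splitting vertices). -/
theorem statement12 (N : ℕ) (hN : 1 ≤ N) (k : ℕ → ℕ) (hk : ∀ i < N, 3 ≤ k i) :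
    (∀ w : List Bool,
        SplitVertex (prefixClosure (leavesList k N)) w ↔
          (w ∈ prefixClosure (leavesList k N) ∧ ∃ j, j ≤ N - 1 ∧ w.length = Kk k j)) ∧
      (∀ t ∈ leavesList k N, ∀ j, j ≤ N - 1 →
        ∃! w : List Bool, w <+: t ∧
          SplitVertex (prefixClosure (leavesList k N)) w ∧ w.length = Kk k j) := by
  have hk1 : ∀ i < N, 1 ≤ k i := fun i hi => le_trans (by norm_num) (hk i hi)
  have main : ∀ w : List Bool,
      SplitVertex (prefixClosure (leavesList k N)) w ↔
        (w ∈ prefixClosure (leavesList k N) ∧ ∃ j, j ≤ N - 1 ∧ w.length = Kk k j) := by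
    intro w
    constructor
    · rintro ⟨hw, ⟨t0, ht0, hp0⟩, ⟨t1, ht1, hp1⟩⟩
      refine ⟨hw, ?_⟩
      have hl0 : t0.length = Kk k N := leaf_length hk1 ht0
      have hwlt : w.length < Kk k N := by
        have := hp0.length_le; simp at this; omega
      obtain ⟨j, hjN, hKle, hKlt⟩ := Kk_between hwlt
      rcases eq_or_lt_of_le hKle with heq | hlt
      · exact ⟨j, by omega, heq.symm⟩
      · exfalso
        have get_of_prefix : ∀ (t : List Bool) (b : Bool), w ++ [b] <+: t →
            t[w.length]? = some b ∧ t[Kk k j]? = w[Kk k j]? := by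
          intro t b hpt
          obtain ⟨r, rfl⟩ := hpt
          rw [List.append_assoc]
          constructor
          · rw [List.getElem?_append_right (le_refl _), Nat.sub_self]
            simp
          · exact List.getElem?_append_left hlt
        obtain ⟨g0, g0'⟩ := get_of_prefix t0 false hp0
        obtain ⟨g1, g1'⟩ := get_of_prefix t1 true hp1
        have e0 := leaf_getElem hk1 ht0 hjN hlt hKlt
        have e1 := leaf_getElem hk1 ht1 hjN hlt hKlt
        rw [g0, g0'] at e0
        rw [g1, g1'] at e1
        rw [← e0] at e1
        simp at e1
    · rintro ⟨⟨t, ht, hwt⟩, j, hjN1, hlen⟩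
      have hjN : j < N := by omega
      have hweq : w = t.take (Kk k j) := by
        rw [List.prefix_iff_eq_take.mp hwt, hlen]
      have hwleaf : w ∈ leavesList k j := hweq ▸ take_leaf hk1 ht (le_of_lt hjN)
      obtain ⟨t0, ht0, hp0⟩ := extend_leaf hjN hwleaf false
      obtain ⟨t1, ht1, hp1⟩ := extend_leaf hjN hwleaf true
      exact ⟨⟨t, ht, hwt⟩, ⟨t0, ht0, hp0⟩, ⟨t1, ht1, hp1⟩⟩
  refine ⟨main, ?_⟩
  intro t ht j hj
  have tlen : t.length = Kk k N := leaf_length hk1 ht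
  have wlen : (t.take (Kk k j)).length = Kk k j := by
    have := Kk_mono k (show j ≤ N by omega)
    simp [List.length_take]; omega
  refine ⟨t.take (Kk k j), ⟨List.take_prefix _ _,
    (main _).mpr ⟨⟨t, ht, List.take_prefix _ _⟩, j, hj, wlen⟩, wlen⟩, ?_⟩
  rintro w' ⟨hpre, _, hlen'⟩
  rw [List.prefix_iff_eq_take.mp hpre, hlen']
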